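/- Let k > 1 be an integer and let W : ℝ → ℝ be continuous, nonnegative and satisfy (H2). There exist positive constants q̄_1,…,q̄_{k-1} such that for all real coefficients q_1,…,q_{k-1} with q_ℓ > -q̄_ℓ for every ℓ ∈ {1,…,k-1}, and with q_k := 1, there exists δ > 0 such that for every open interval I ⊂ ℝ of length 1 and every function u : ℝ → ℝ of class C^k, ∫_I [ W(u) + Σ_{ℓ=1}^k q_ℓ |u^{(ℓ)}|² ] dt ≥ δ · ∫_I [ W(u) + Σ_{ℓ=1}^k |u^{(ℓ)}|² ] dt. -/

import Mathlib

/-!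
Intermediate derivatives are interpolated between `u` and `u^(k)`: on a unit interval,
`|u^(ℓ)(t)|² ≤ A ∫ u² + ε ∫ |u^(k)|²` for `1 ≤ ℓ < k`. For `k = 2` this comes from the mean
value theorem on the outer thirds of a short interval around `t` together with Cauchy–Schwarz
for `u''`; higher orders follow by induction, absorbing the top-but-one derivative.

Intermediate derivatives do not see constants, so it suffices to find `c` with
`∫ (u - c)² ≲ ∫ W(u) + |u^(k)|²`. If `u` keeps a sign on `I`, then `c = ±1` works by (H2).
If `u` vanishes on `I`, take `c = 0`: (H2) gives `∫ u² ≤ 2 ∫ W(u) + 2`, and the constant `2` is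
absorbed because either the energy is large, or `u'` is bounded and `u` stays near `0` on a
subinterval of definite length, where `W(u) ≥ 1/4`. So the lower-order terms cost at most `C`
times the energy, and coefficients `q_ℓ > -1/(2C)` lose at most half of it.
-/

open MeasureTheory Set

noncomputable def doubleWell (s : ℝ) : ℝ := min ((s + 1) ^ 2) ((s - 1) ^ 2)

lemma doubleWell_nonneg (s : ℝ) : 0 ≤ doubleWell s :=
  le_min (sq_nonneg _) (sq_nonneg _)

lemma sq_le_two_mul_doubleWell_add_two (s : ℝ) : s ^ 2 ≤ 2 * doubleWell s + 2 := by
  rcases min_cases ((s + 1) ^ 2) ((s - 1) ^ 2) with ⟨h, -⟩ | ⟨h, -⟩ <;>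
    rw [doubleWell, h] <;> nlinarith [sq_nonneg (s + 2), sq_nonneg (s - 2)]

lemma sq_sub_one_le_doubleWell {s : ℝ} (hs : 0 ≤ s) : (s - 1) ^ 2 ≤ doubleWell s :=
  le_min (by nlinarith) le_rfl

lemma sq_add_one_le_doubleWell {s : ℝ} (hs : s ≤ 0) : (s + 1) ^ 2 ≤ doubleWell s :=
  le_min le_rfl (by nlinarith)

lemma quarter_le_doubleWell {s : ℝ} (hs : |s| ≤ 1 / 2) : 1 / 4 ≤ doubleWell s := by
  rw [abs_le] at hs
  exact le_min (by nlinarith) (by nlinarith)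

lemma exists_eq_zero_or_forall_nonneg_or_forall_nonpos {u : ℝ → ℝ} (hu : Continuous u)
    {s : Set ℝ} (hs : IsPreconnected s) :
    (∃ t ∈ s, u t = 0) ∨ (∀ t ∈ s, 0 ≤ u t) ∨ ∀ t ∈ s, u t ≤ 0 := by
  by_contra! ⟨hzero, ⟨t₁, ht₁, hneg⟩, ⟨t₂, ht₂, hpos⟩⟩
  obtain ⟨t, ht, hut⟩ := hs.intermediate_value ht₁ ht₂ hu.continuousOn ⟨hneg.le, hpos.le⟩
  exact hzero t ht hut

lemma exists_Icc_subset_Icc_of_mem {a b t h : ℝ} (ht : t ∈ Icc a b) (hh₀ : 0 ≤ h)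
    (hh : h ≤ b - a) : ∃ p, t ∈ Icc p (p + h) ∧ Icc p (p + h) ⊆ Icc a b := by
  refine ⟨min t (b - h), ⟨min_le_left _ _, ?_⟩, Icc_subset_Icc ?_ ?_⟩
  · rcases min_cases t (b - h) with ⟨h', -⟩ | ⟨h', -⟩ <;> linarith [ht.2]
  · exact le_min ht.1 (by linarith)
  · linarith [min_le_right t (b - h)]

lemma setIntegral_Icc_mono {g : ℝ → ℝ} (hg : Continuous g) (hg₀ : ∀ s, 0 ≤ g s)
    {p q p' q' : ℝ} (hpq : Icc p q ⊆ Icc p' q') :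
    ∫ s in Icc p q, g s ≤ ∫ s in Icc p' q', g s :=
  setIntegral_mono_set hg.integrableOn_Icc (.of_forall fun s ↦ hg₀ s) hpq.eventuallyLE

lemma integrableOn_Ioo_of_continuous {g : ℝ → ℝ} (hg : Continuous g) (a b : ℝ) :
    IntegrableOn g (Ioo a b) :=
  hg.integrableOn_Icc.mono_set Ioo_subset_Icc_self

lemma setIntegral_unit_le_of_forall_le {g : ℝ → ℝ} {a c : ℝ} (hg : Continuous g)
    (h : ∀ t ∈ Ioo a (a + 1), g t ≤ c) : ∫ t in Ioo a (a + 1), g t ≤ c := by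
  have := setIntegral_mono_on (integrableOn_Ioo_of_continuous hg a (a + 1))
    (integrableOn_const (C := c) (measure_Ioo_lt_top (μ := volume)).ne) measurableSet_Ioo h
  simpa [Real.volume_real_Ioo_of_le] using this

lemma exists_mul_le_setIntegral_Icc {g : ℝ → ℝ} (hg : Continuous g) {p q : ℝ} (hpq : p < q) :
    ∃ x ∈ Icc p q, (q - p) * g x ≤ ∫ s in Icc p q, g s := by
  obtain ⟨x, hx, hle⟩ := exists_le_setAverage (μ := volume) (s := Icc p q) (by simp [hpq])
    measure_Icc_lt_top.ne
    hg.integrableOn_Icc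
  refine ⟨x, hx, ?_⟩
  rwa [setAverage_eq, Real.volume_real_Icc_of_le hpq.le, smul_eq_mul,
    le_inv_mul_iff₀ (sub_pos.2 hpq)] at hle

lemma sq_setIntegral_abs_le {f : ℝ → ℝ} (hf : Continuous f) {p q : ℝ} (hpq : p ≤ q) :
    (∫ s in Icc p q, |f s|) ^ 2 ≤ (q - p) * ∫ s in Icc p q, f s ^ 2 := by
  have hquad : ∀ x : ℝ, 0 ≤ (∫ s in Icc p q, f s ^ 2) * (x * x)
      + 2 * (∫ s in Icc p q, |f s|) * x + (q - p) := by
    intro x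
    have hexp : ∀ s, (x * |f s| + 1) ^ 2 = x * x * f s ^ 2 + 2 * x * |f s| + 1 := by
      intro s; rw [← sq_abs (f s)]; ring
    have h₀ : 0 ≤ ∫ s in Icc p q, (x * |f s| + 1) ^ 2 :=
      setIntegral_nonneg measurableSet_Icc fun _ _ ↦ sq_nonneg _
    simp_rw [hexp] at h₀
    rw [integral_add (Continuous.integrableOn_Icc (by fun_prop)) continuous_const.integrableOn_Icc,
      integral_add (Continuous.integrableOn_Icc (by fun_prop))
        (Continuous.integrableOn_Icc (by fun_prop)), integral_const_mul, integral_const_mul,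
      setIntegral_const, Real.volume_real_Icc_of_le hpq, smul_eq_mul, mul_one] at h₀
    linarith
  have := discrim_le_zero hquad
  rw [discrim] at this
  linarith

lemma sq_sub_le_mul_setIntegral_sq_deriv {f : ℝ → ℝ} (hf : ContDiff ℝ 1 f) {p q x y : ℝ}
    (hx : x ∈ Icc p q) (hy : y ∈ Icc p q) :
    (f y - f x) ^ 2 ≤ (q - p) * ∫ s in Icc p q, deriv f s ^ 2 := by
  have hf' : Continuous (deriv f) := hf.continuous_deriv le_rfl
  have hftc : ∫ s in x..y, deriv f s = f y - f x :=
    intervalIntegral.integral_deriv_eq_sub (fun s _ ↦ hf.differentiable one_ne_zero s)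
      (hf'.intervalIntegrable x y)
  have habs : |f y - f x| ≤ ∫ s in Icc p q, |deriv f s| := by
    rw [← hftc]
    refine (intervalIntegral.norm_integral_le_integral_norm_uIoc (f := deriv f)).trans ?_
    exact setIntegral_mono_set hf'.abs.integrableOn_Icc (.of_forall fun _ ↦ abs_nonneg _)
      (uIoc_subset_uIcc.trans (uIcc_subset_Icc hx hy)).eventuallyLE
  calc (f y - f x) ^ 2 = |f y - f x| ^ 2 := (sq_abs _).symm
    _ ≤ (∫ s in Icc p q, |deriv f s|) ^ 2 := pow_le_pow_left₀ (abs_nonneg _) habs 2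
    _ ≤ _ := sq_setIntegral_abs_le hf' (hx.1.trans hx.2)

lemma sq_deriv_le_of_mem_Icc {w : ℝ → ℝ} (hw : ContDiff ℝ 2 w) {p h t : ℝ} (hh : 0 < h)
    (ht : t ∈ Icc p (p + h)) :
    deriv w t ^ 2 ≤ 216 / h ^ 3 * (∫ s in Icc p (p + h), w s ^ 2)
      + 2 * h * ∫ s in Icc p (p + h), deriv (deriv w) s ^ 2 := by
  set I := ∫ s in Icc p (p + h), w s ^ 2
  have hw₀ : Continuous w := hw.continuous
  have hsq : Continuous fun s ↦ w s ^ 2 := hw₀.pow 2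
  have hsq₀ : ∀ s, 0 ≤ w s ^ 2 := fun s ↦ sq_nonneg _
  obtain ⟨x, hx, hxI⟩ := exists_mul_le_setIntegral_Icc hsq (show p < p + h / 3 by linarith)
  obtain ⟨y, hy, hyI⟩ := exists_mul_le_setIntegral_Icc hsq (show p + 2 * h / 3 < p + h by linarith)
  have hxI' : h * w x ^ 2 ≤ 3 * I := by
    have := hxI.trans (setIntegral_Icc_mono hsq hsq₀
      (Icc_subset_Icc le_rfl (show p + h / 3 ≤ p + h by linarith)))
    linarith
  have hyI' : h * w y ^ 2 ≤ 3 * I := by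
    have := hyI.trans (setIntegral_Icc_mono hsq hsq₀
      (Icc_subset_Icc (show p ≤ p + 2 * h / 3 by linarith) le_rfl))
    linarith
  have hxy : h / 3 ≤ y - x := by linarith [hx.2, hy.1]
  obtain ⟨σ, hσ, hslope⟩ := exists_deriv_eq_slope w (show x < y by linarith) hw₀.continuousOn
    (hw.differentiable (by norm_num)).differentiableOn
  rw [eq_div_iff (by linarith)] at hslope
  have hσbound : h ^ 3 * deriv w σ ^ 2 ≤ 108 * I := by
    have h₁ : h ^ 2 * deriv w σ ^ 2 ≤ 9 * (deriv w σ * (y - x)) ^ 2 := by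
      rw [mul_pow]
      nlinarith [mul_le_mul hxy hxy (by positivity) (by linarith), sq_nonneg (deriv w σ)]
    have h₂ : (w y - w x) ^ 2 ≤ 2 * (w x ^ 2 + w y ^ 2) := by nlinarith [sq_nonneg (w x + w y)]
    rw [hslope] at h₁
    nlinarith
  have hσt : (deriv w t - deriv w σ) ^ 2 ≤ h * ∫ s in Icc p (p + h), deriv (deriv w) s ^ 2 := by
    have := sq_sub_le_mul_setIntegral_sq_deriv (hw.deriv' (n := 1)) (x := σ) (y := t)
      ⟨by linarith [hx.1, hσ.1], by linarith [hy.2, hσ.2]⟩ ht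
    rwa [add_sub_cancel_left] at this
  have hsplit : deriv w t ^ 2 ≤ 2 * deriv w σ ^ 2 + 2 * (deriv w t - deriv w σ) ^ 2 := by
    nlinarith [sq_nonneg (deriv w t - 2 * deriv w σ)]
  have hσbound' : 2 * deriv w σ ^ 2 ≤ 216 / h ^ 3 * I := by
    rw [div_mul_eq_mul_div, le_div_iff₀ (by positivity)]
    linarith
  linarith

lemma sq_deriv_le_unit {w : ℝ → ℝ} (hw : ContDiff ℝ 2 w) {a h t : ℝ} (hh₀ : 0 < h) (hh₁ : h ≤ 1)
    (ht : t ∈ Icc a (a + 1)) :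
    deriv w t ^ 2 ≤ 216 / h ^ 3 * (∫ s in Ioo a (a + 1), w s ^ 2)
      + 2 * h * ∫ s in Ioo a (a + 1), deriv (deriv w) s ^ 2 := by
  obtain ⟨p, htp, hp⟩ := exists_Icc_subset_Icc_of_mem ht hh₀.le (by linarith)
  have hw₂ : Continuous (deriv (deriv w)) := (hw.deriv' (n := 1)).continuous_deriv le_rfl
  refine (sq_deriv_le_of_mem_Icc hw hh₀ htp).trans ?_
  rw [← integral_Icc_eq_integral_Ioo, ← integral_Icc_eq_integral_Ioo]
  exact add_le_add
    (mul_le_mul_of_nonneg_left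
      (setIntegral_Icc_mono (hw.continuous.pow 2) (fun _ ↦ sq_nonneg _) hp) (by positivity))
    (mul_le_mul_of_nonneg_left
      (setIntegral_Icc_mono (hw₂.pow 2) (fun _ ↦ sq_nonneg _) hp) (by positivity))

lemma contDiff_two_iteratedDeriv {u : ℝ → ℝ} {n j : ℕ} (hu : ContDiff ℝ (n : ℕ∞) u)
    (hj : j + 2 ≤ n) : ContDiff ℝ 2 (iteratedDeriv j u) := by
  have hu' : ContDiff ℝ ((2 + j : ℕ) : ℕ∞) u := hu.of_le (by exact_mod_cast (by omega))
  rw [iteratedDeriv_eq_iterate]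
  exact_mod_cast ContDiff.iterate_deriv' 2 j (by exact_mod_cast hu')

lemma continuous_sq_iteratedDeriv {u : ℝ → ℝ} {n ℓ : ℕ} (hu : ContDiff ℝ (n : ℕ∞) u)
    (hℓ : ℓ ≤ n) : Continuous fun s ↦ iteratedDeriv ℓ u s ^ 2 :=
  (hu.continuous_iteratedDeriv ℓ (by exact_mod_cast hℓ)).pow 2

lemma exists_sq_deriv_le {ε : ℝ} (hε : 0 < ε) :
    ∃ B > 0, ∀ w : ℝ → ℝ, ContDiff ℝ 2 w → ∀ a : ℝ, ∀ t ∈ Icc a (a + 1),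
      deriv w t ^ 2 ≤
        B * (∫ s in Ioo a (a + 1), w s ^ 2) + ε * ∫ s in Ioo a (a + 1), deriv (deriv w) s ^ 2 := by
  set h := min 1 (ε / 2)
  have hh₀ : 0 < h := lt_min one_pos (by linarith)
  have hhε : 2 * h ≤ ε := by linarith [min_le_right 1 (ε / 2)]
  refine ⟨216 / h ^ 3, by positivity, fun w hw a t ht ↦ ?_⟩
  have hY : 0 ≤ ∫ s in Ioo a (a + 1), deriv (deriv w) s ^ 2 :=
    setIntegral_nonneg measurableSet_Ioo fun _ _ ↦ sq_nonneg _
  have := sq_deriv_le_unit hw hh₀ (min_le_left _ _) ht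
  nlinarith [mul_le_mul_of_nonneg_right hhε hY]

theorem exists_sq_iteratedDeriv_le (m : ℕ) {ε : ℝ} (hε : 0 < ε) :
    ∃ A > 0, ∀ u : ℝ → ℝ, ContDiff ℝ ((m + 2 : ℕ) : ℕ∞) u → ∀ a : ℝ, ∀ ℓ, 1 ≤ ℓ → ℓ ≤ m + 1 →
      ∀ t ∈ Icc a (a + 1), iteratedDeriv ℓ u t ^ 2 ≤
        A * (∫ s in Ioo a (a + 1), u s ^ 2) +
          ε * ∫ s in Ioo a (a + 1), iteratedDeriv (m + 2) u s ^ 2 := by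
  induction m generalizing ε with
  | zero =>
    obtain ⟨B, hB, hBw⟩ := exists_sq_deriv_le hε
    refine ⟨B, hB, fun u hu a ℓ hℓ₁ hℓ₂ t ht ↦ ?_⟩
    obtain rfl : ℓ = 1 := by omega
    rw [iteratedDeriv_one, iteratedDeriv_succ, iteratedDeriv_one]
    exact hBw u (by exact_mod_cast hu) a t ht
  | succ m ih =>
    obtain ⟨B, hB, hBw⟩ := exists_sq_deriv_le (ε := ε / 4) (by positivity)
    obtain ⟨A₁, hA₁, hA₁u⟩ := ih (ε := 1 / (2 * B)) (by positivity)
    obtain ⟨A₂, hA₂, hA₂u⟩ := ih (ε := 1) one_pos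
    refine ⟨A₂ + 2 * B * A₁, by positivity, fun u hu a ℓ hℓ₁ hℓ₂ t ht ↦ ?_⟩
    have hu' : ContDiff ℝ ((m + 2 : ℕ) : ℕ∞) u := hu.of_le (by exact_mod_cast (by omega))
    set E₀ := ∫ s in Ioo a (a + 1), u s ^ 2
    set X := ∫ s in Ioo a (a + 1), iteratedDeriv (m + 2) u s ^ 2
    set Y := ∫ s in Ioo a (a + 1), iteratedDeriv (m + 3) u s ^ 2
    have hE₀ : 0 ≤ E₀ := setIntegral_nonneg measurableSet_Ioo fun _ _ ↦ sq_nonneg _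
    have hY : 0 ≤ Y := setIntegral_nonneg measurableSet_Ioo fun _ _ ↦ sq_nonneg _
    have hmid : ∫ s in Ioo a (a + 1), iteratedDeriv (m + 1) u s ^ 2 ≤ A₁ * E₀ + 1 / (2 * B) * X :=
      setIntegral_unit_le_of_forall_le (continuous_sq_iteratedDeriv hu (by omega))
        fun s hs ↦ hA₁u u hu' a (m + 1) (by omega) le_rfl s (Ioo_subset_Icc_self hs)
    have hpt : ∀ s ∈ Icc a (a + 1),
        iteratedDeriv (m + 2) u s ^ 2 ≤ B * A₁ * E₀ + X / 2 + ε / 4 * Y := by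
      intro s hs
      have := hBw _ (contDiff_two_iteratedDeriv hu (j := m + 1) (by omega)) a s hs
      rw [← iteratedDeriv_succ, ← iteratedDeriv_succ] at this
      have hBX : B * (1 / (2 * B) * X) = X / 2 := by field_simp
      nlinarith [mul_le_mul_of_nonneg_left hmid hB.le]
    -- integrating `hpt` absorbs the term `X / 2`
    have hX : X ≤ 2 * B * A₁ * E₀ + ε / 2 * Y := by
      have := setIntegral_unit_le_of_forall_le (continuous_sq_iteratedDeriv hu (by omega))
        fun s hs ↦ hpt s (Ioo_subset_Icc_self hs)
      linarith
    rcases Nat.lt_or_ge ℓ (m + 2) with hℓ | hℓ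
    · nlinarith [hA₂u u hu' a ℓ hℓ₁ (by omega) t ht]
    · obtain rfl : ℓ = m + 2 := by omega
      nlinarith [hpt t ht]

lemma inv_le_setIntegral_of_eq_zero {W u : ℝ → ℝ} (hW : Continuous W)
    (hH2 : ∀ s, doubleWell s ≤ W s) (hu : Differentiable ℝ u) {a L t₀ : ℝ} (hL : 1 ≤ L)
    (hu' : ∀ t ∈ Icc a (a + 1), |deriv u t| ≤ L) (ht₀ : t₀ ∈ Icc a (a + 1)) (hu₀ : u t₀ = 0) :
    1 / (8 * L) ≤ ∫ t in Ioo a (a + 1), W (u t) := by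
  set r := 1 / (2 * L) with hr
  have hr₀ : 0 < r := by positivity
  have hr₁ : r ≤ 1 := by rw [div_le_one (by positivity)]; linarith
  obtain ⟨p, ht₀p, hp⟩ := exists_Icc_subset_Icc_of_mem ht₀ hr₀.le (by linarith)
  have hWu : Continuous fun t ↦ W (u t) := hW.comp hu.continuous
  have hquarter : ∀ t ∈ Icc p (p + r), 1 / 4 ≤ W (u t) := by
    intro t ht
    have hlip := (convex_Icc a (a + 1)).norm_image_sub_le_of_norm_deriv_le
      (fun x _ ↦ hu x) hu' (hp ht₀p) (hp ht)
    rw [hu₀, sub_zero, Real.norm_eq_abs, Real.norm_eq_abs] at hlip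
    have hdist : |t - t₀| ≤ r :=
      abs_sub_le_iff.2 ⟨by linarith [ht.2, ht₀p.1], by linarith [ht.1, ht₀p.2]⟩
    refine (quarter_le_doubleWell ?_).trans (hH2 _)
    calc |u t| ≤ L * |t - t₀| := hlip
      _ ≤ L * r := mul_le_mul_of_nonneg_left hdist (by linarith)
      _ = 1 / 2 := by rw [hr]; field_simp
  calc 1 / (8 * L) = 1 / 4 * volume.real (Icc p (p + r)) := by
        rw [Real.volume_real_Icc_of_le (by linarith), add_sub_cancel_left, hr]; field_simp; ring
    _ ≤ ∫ t in Icc p (p + r), W (u t) :=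
        setIntegral_ge_of_const_le_real measurableSet_Icc measure_Icc_lt_top.ne hquarter
          hWu.integrableOn_Icc
    _ ≤ ∫ t in Icc a (a + 1), W (u t) :=
        setIntegral_Icc_mono hWu (fun t ↦ (doubleWell_nonneg _).trans (hH2 _)) hp
    _ = ∫ t in Ioo a (a + 1), W (u t) := integral_Icc_eq_integral_Ioo

lemma setIntegral_sq_le_of_eq_zero {W u : ℝ → ℝ} (hW : Continuous W)
    (hH2 : ∀ s, doubleWell s ≤ W s) (hu : Differentiable ℝ u) {a A Y t₀ : ℝ} (hA : 0 ≤ A)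
    (hY : 0 ≤ Y)
    (hu' : ∀ t ∈ Icc a (a + 1), deriv u t ^ 2 ≤ A * (∫ s in Ioo a (a + 1), u s ^ 2) + Y)
    (ht₀ : t₀ ∈ Icc a (a + 1)) (hu₀ : u t₀ = 0) :
    ∫ t in Ioo a (a + 1), u t ^ 2 ≤
      (2 + 16 * (2 * A + 1)) * ((∫ t in Ioo a (a + 1), W (u t)) + Y) := by
  set F := ∫ t in Ioo a (a + 1), W (u t)
  have hF : 0 ≤ F :=
    setIntegral_nonneg measurableSet_Ioo fun t _ ↦ (doubleWell_nonneg _).trans (hH2 _)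
  have huc : Continuous u := hu.continuous
  have hE₀ : ∫ t in Ioo a (a + 1), u t ^ 2 ≤ 2 * F + 2 := by
    have := setIntegral_unit_le_of_forall_le (a := a) (c := 2)
      (g := fun t ↦ u t ^ 2 - 2 * W (u t)) (by fun_prop)
      fun t _ ↦ by linarith [sq_le_two_mul_doubleWell_add_two (u t), hH2 (u t)]
    rw [integral_sub (integrableOn_Ioo_of_continuous (by fun_prop) _ _)
      (integrableOn_Ioo_of_continuous (by fun_prop) _ _), integral_const_mul] at this
    linarith
  rcases le_or_gt 1 (F + Y) with hlarge | hsmall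
  · nlinarith
  -- small energy bounds `u'`, and then the zero of `u` forces a definite amount of energy
  have hLip : ∀ t ∈ Icc a (a + 1), |deriv u t| ≤ 2 * A + 1 :=
    fun t ht ↦ abs_le_of_sq_le_sq (by nlinarith [hu' t ht]) (by positivity)
  have hFL := inv_le_setIntegral_of_eq_zero hW hH2 hu (by linarith) hLip ht₀ hu₀
  rw [div_le_iff₀ (by positivity)] at hFL
  nlinarith

theorem exists_setIntegral_sq_sub_le (m : ℕ) {W : ℝ → ℝ} (hW : Continuous W)
    (hH2 : ∀ s, doubleWell s ≤ W s) :
    ∃ K > 0, ∀ u : ℝ → ℝ, ContDiff ℝ ((m + 2 : ℕ) : ℕ∞) u → ∀ a : ℝ, ∃ c : ℝ,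
      ∫ t in Ioo a (a + 1), (u t - c) ^ 2 ≤
        K * ((∫ t in Ioo a (a + 1), W (u t)) +
          ∫ t in Ioo a (a + 1), iteratedDeriv (m + 2) u t ^ 2) := by
  obtain ⟨A, hA, hAu⟩ := exists_sq_iteratedDeriv_le m one_pos
  refine ⟨2 + 16 * (2 * A + 1), by positivity, fun u hu a ↦ ?_⟩
  set F := ∫ t in Ioo a (a + 1), W (u t)
  set Y := ∫ t in Ioo a (a + 1), iteratedDeriv (m + 2) u t ^ 2
  have hF : 0 ≤ F :=
    setIntegral_nonneg measurableSet_Ioo fun t _ ↦ (doubleWell_nonneg _).trans (hH2 _)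
  have hY : 0 ≤ Y := setIntegral_nonneg measurableSet_Ioo fun _ _ ↦ sq_nonneg _
  have huc : Continuous u := hu.continuous
  have hint : ∀ c : ℝ, IntegrableOn (fun t ↦ (u t - c) ^ 2) (Ioo a (a + 1)) :=
    fun c ↦ integrableOn_Ioo_of_continuous (by fun_prop) _ _
  have hWu : IntegrableOn (fun t ↦ W (u t)) (Ioo a (a + 1)) :=
    integrableOn_Ioo_of_continuous (by fun_prop) _ _
  rcases exists_eq_zero_or_forall_nonneg_or_forall_nonpos huc isPreconnected_Ioo with
    ⟨t₀, ht₀, hzero⟩ | hpos | hneg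
  · refine ⟨0, ?_⟩
    simp only [sub_zero]
    refine setIntegral_sq_le_of_eq_zero hW hH2 (hu.differentiable (by simp)) hA.le hY
      (fun t ht ↦ ?_) (Ioo_subset_Icc_self ht₀) hzero
    simpa using hAu u hu a 1 le_rfl (by omega) t ht
  · refine ⟨1, (setIntegral_mono_on (hint 1) hWu measurableSet_Ioo
      fun t ht ↦ (sq_sub_one_le_doubleWell (hpos t ht)).trans (hH2 _)).trans ?_⟩
    nlinarith
  · refine ⟨-1, (setIntegral_mono_on (hint (-1)) hWu measurableSet_Ioo fun t ht ↦ ?_).trans ?_⟩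
    · rw [sub_neg_eq_add]
      exact (sq_add_one_le_doubleWell (hneg t ht)).trans (hH2 _)
    · nlinarith

lemma iteratedDeriv_sub_const {u : ℝ → ℝ} {ℓ : ℕ} (hℓ : 1 ≤ ℓ) (c : ℝ) :
    iteratedDeriv ℓ (fun s ↦ u s - c) = iteratedDeriv ℓ u := by
  obtain ⟨j, rfl⟩ : ∃ j, ℓ = j + 1 := ⟨ℓ - 1, by omega⟩
  rw [iteratedDeriv_succ', iteratedDeriv_succ']
  congr 1
  funext x
  exact deriv_sub_const c

theorem exists_sum_setIntegral_sq_iteratedDeriv_le (m : ℕ) {W : ℝ → ℝ} (hW : Continuous W)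
    (hH2 : ∀ s, doubleWell s ≤ W s) :
    ∃ C > 0, ∀ u : ℝ → ℝ, ContDiff ℝ ((m + 2 : ℕ) : ℕ∞) u → ∀ a : ℝ,
      ∑ ℓ ∈ Finset.Icc 1 (m + 1), ∫ t in Ioo a (a + 1), iteratedDeriv ℓ u t ^ 2 ≤
        C * ((∫ t in Ioo a (a + 1), W (u t)) +
          ∫ t in Ioo a (a + 1), iteratedDeriv (m + 2) u t ^ 2) := by
  obtain ⟨A, hA, hAu⟩ := exists_sq_iteratedDeriv_le m one_pos
  obtain ⟨K, hK, hKu⟩ := exists_setIntegral_sq_sub_le m hW hH2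
  refine ⟨(m + 1) * (A * K + 1), by positivity, fun u hu a ↦ ?_⟩
  set F := ∫ t in Ioo a (a + 1), W (u t)
  set Y := ∫ t in Ioo a (a + 1), iteratedDeriv (m + 2) u t ^ 2
  have hF : 0 ≤ F :=
    setIntegral_nonneg measurableSet_Ioo fun t _ ↦ (doubleWell_nonneg _).trans (hH2 _)
  obtain ⟨c, hc⟩ := hKu u hu a
  have hv : ContDiff ℝ ((m + 2 : ℕ) : ℕ∞) fun s ↦ u s - c := hu.sub contDiff_const
  have hℓ : ∀ ℓ ∈ Finset.Icc 1 (m + 1),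
      ∫ t in Ioo a (a + 1), iteratedDeriv ℓ u t ^ 2 ≤ (A * K + 1) * (F + Y) := by
    intro ℓ hℓ
    rw [Finset.mem_Icc] at hℓ
    refine setIntegral_unit_le_of_forall_le (continuous_sq_iteratedDeriv hu (by omega))
      fun t ht ↦ ?_
    have := hAu _ hv a ℓ hℓ.1 hℓ.2 t (Ioo_subset_Icc_self ht)
    rw [iteratedDeriv_sub_const hℓ.1, iteratedDeriv_sub_const (by omega)] at this
    nlinarith [mul_le_mul_of_nonneg_left hc hA.le]
  refine (Finset.sum_le_card_nsmul _ _ _ hℓ).trans_eq ?_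
  rw [Nat.card_Icc, nsmul_eq_mul, add_tsub_cancel_right]
  push_cast
  ring

lemma div_mul_add_sum_le_add_sum_mul {s : Finset ℕ} {C F Y : ℝ} {E q : ℕ → ℝ} (hC : 0 < C)
    (hE : ∀ ℓ ∈ s, 0 ≤ E ℓ) (hS : ∑ ℓ ∈ s, E ℓ ≤ C * (F + Y))
    (hq : ∀ ℓ ∈ s, -(1 / (2 * C)) < q ℓ) :
    1 / (2 * (1 + C)) * (F + (∑ ℓ ∈ s, E ℓ + Y)) ≤ F + (∑ ℓ ∈ s, q ℓ * E ℓ + Y) := by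
  have hqS : -(1 / (2 * C)) * ∑ ℓ ∈ s, E ℓ ≤ ∑ ℓ ∈ s, q ℓ * E ℓ := by
    rw [Finset.mul_sum]
    exact Finset.sum_le_sum fun ℓ hℓ ↦ mul_le_mul_of_nonneg_right (hq ℓ hℓ).le (hE ℓ hℓ)
  have hhalf : 1 / (2 * C) * ∑ ℓ ∈ s, E ℓ ≤ (F + Y) / 2 := by
    calc 1 / (2 * C) * ∑ ℓ ∈ s, E ℓ ≤ 1 / (2 * C) * (C * (F + Y)) :=
          mul_le_mul_of_nonneg_left hS (by positivity)
      _ = (F + Y) / 2 := by field_simp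
  have htotal : 1 / (2 * (1 + C)) * (F + (∑ ℓ ∈ s, E ℓ + Y)) ≤ (F + Y) / 2 := by
    rw [div_mul_eq_mul_div, div_le_div_iff₀ (by positivity) (by norm_num)]
    nlinarith
  linarith

lemma setIntegral_add_sum_mul_sq_iteratedDeriv {W u : ℝ → ℝ} {k : ℕ} (hW : Continuous W)
    (hu : ContDiff ℝ (k : ℕ∞) u) (a : ℝ) (q : ℕ → ℝ) :
    ∫ t in Ioo a (a + 1), (W (u t) + ∑ ℓ ∈ Finset.Icc 1 k, q ℓ * iteratedDeriv ℓ u t ^ 2) =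
      (∫ t in Ioo a (a + 1), W (u t)) +
        ∑ ℓ ∈ Finset.Icc 1 k, q ℓ * ∫ t in Ioo a (a + 1), iteratedDeriv ℓ u t ^ 2 := by
  have hℓ : ∀ ℓ ∈ Finset.Icc 1 k,
      IntegrableOn (fun t ↦ q ℓ * iteratedDeriv ℓ u t ^ 2) (Ioo a (a + 1)) := fun ℓ hℓ ↦
    integrableOn_Ioo_of_continuous
      (continuous_const.mul (continuous_sq_iteratedDeriv hu (Finset.mem_Icc.1 hℓ).2)) _ _
  have hWu : IntegrableOn (fun t ↦ W (u t)) (Ioo a (a + 1)) :=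
    integrableOn_Ioo_of_continuous (hW.comp hu.continuous) _ _
  rw [integral_add hWu (integrable_finsetSum _ hℓ), integral_finsetSum _ hℓ]
  simp only [integral_const_mul]

theorem statement5_general (k : ℕ) (hk : 1 < k) (W : ℝ → ℝ)
    (hWcont : Continuous W)
    (hH2 : ∀ s : ℝ, min ((s + 1) ^ 2) ((s - 1) ^ 2) ≤ W s) :
    ∃ qbar : ℕ → ℝ, (∀ ℓ, 1 ≤ ℓ → ℓ ≤ k - 1 → 0 < qbar ℓ) ∧
      ∀ q : ℕ → ℝ, (∀ ℓ, 1 ≤ ℓ → ℓ ≤ k - 1 → -qbar ℓ < q ℓ) → q k = 1 →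
        ∃ δ : ℝ, 0 < δ ∧
          ∀ a : ℝ, ∀ u : ℝ → ℝ, ContDiff ℝ (k : ℕ∞) u →
            δ * ∫ t in Set.Ioo a (a + 1),
                  (W (u t) + ∑ ℓ ∈ Finset.Icc 1 k, (iteratedDeriv ℓ u t) ^ 2) ≤
              ∫ t in Set.Ioo a (a + 1),
                (W (u t) + ∑ ℓ ∈ Finset.Icc 1 k, q ℓ * (iteratedDeriv ℓ u t) ^ 2) := by
  obtain ⟨m, rfl⟩ : ∃ m, k = m + 2 := ⟨k - 2, by omega⟩
  obtain ⟨C, hC, hCu⟩ := exists_sum_setIntegral_sq_iteratedDeriv_le m hWcont hH2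
  refine ⟨fun _ ↦ 1 / (2 * C), fun _ _ _ ↦ by positivity, fun q hq hqk ↦
    ⟨1 / (2 * (1 + C)), by positivity, fun a u hu ↦ ?_⟩⟩
  have hunweighted := setIntegral_add_sum_mul_sq_iteratedDeriv hWcont hu a fun _ ↦ 1
  simp only [one_mul] at hunweighted
  rw [hunweighted, setIntegral_add_sum_mul_sq_iteratedDeriv hWcont hu a q,
    Finset.sum_Icc_succ_top (b := m + 1) (by omega),
    Finset.sum_Icc_succ_top (b := m + 1) (by omega), hqk, one_mul]
  exact div_mul_add_sum_le_add_sum_mul hC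
    (fun _ _ ↦ setIntegral_nonneg measurableSet_Ioo fun _ _ ↦ sq_nonneg _) (hCu u hu a)
    fun ℓ hℓ ↦ hq ℓ (Finset.mem_Icc.1 hℓ).1 (by simpa using (Finset.mem_Icc.1 hℓ).2)

/-- Coercivity of the one-dimensional energy on unit intervals
(Corollary of the interpolation inequality): there are constants `q̄_1,…,q̄_{k-1} > 0`
such that whenever `q_ℓ > -q̄_ℓ` for `ℓ ∈ {1,…,k-1}` and `q_k = 1`, there is `δ > 0`
with `∫_I [W(u) + Σ q_ℓ |u^(ℓ)|²] ≥ δ ∫_I [W(u) + Σ |u^(ℓ)|²]` for every open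
interval `I` of length `1` and every `u` of class `C^k`. -/
theorem statement5 (k : ℕ) (hk : 1 < k) (W : ℝ → ℝ)
    (hWcont : Continuous W) (hWnonneg : ∀ s, 0 ≤ W s)
    (hH2 : ∀ s : ℝ, min ((s + 1) ^ 2) ((s - 1) ^ 2) ≤ W s) :
    ∃ qbar : ℕ → ℝ, (∀ ℓ, 1 ≤ ℓ → ℓ ≤ k - 1 → 0 < qbar ℓ) ∧
      ∀ q : ℕ → ℝ, (∀ ℓ, 1 ≤ ℓ → ℓ ≤ k - 1 → -qbar ℓ < q ℓ) → q k = 1 →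
        ∃ δ : ℝ, 0 < δ ∧
          ∀ a : ℝ, ∀ u : ℝ → ℝ, ContDiff ℝ (k : ℕ∞) u →
            δ * ∫ t in Set.Ioo a (a + 1),
                  (W (u t) + ∑ ℓ ∈ Finset.Icc 1 k, (iteratedDeriv ℓ u t) ^ 2) ≤
              ∫ t in Set.Ioo a (a + 1),
                (W (u t) + ∑ ℓ ∈ Finset.Icc 1 k, q ℓ * (iteratedDeriv ℓ u t) ^ 2) :=
  statement5_general k hk W hWcont hH2
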